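/- arXiv:1707.09357 — 4 statements merged into one kernel-verified Lean document; each statement's English description precedes it below -/
import Mathlib

section
/- Let f be a homeomorphism of a compact metric space (X,d) and let n be a positive integer. If f is positively n-expansive and has the L-shadowing property, then X is a finite set. -/
open Metric Filter Set

variable {X : Type*} [MetricSpace X]

/-- The iterate of a homeomorphism by an integer power. -/
def hIter (f : X ≃ₜ X) (k : ℤ) (x : X) : X := (f.toEquiv ^ k) x

/-- The local stable set of `x` of size `c`:
points whose forward iterates stay `c`-close to those of `x`. -/
def localStable (f : X ≃ₜ X) (c : ℝ) (x : X) : Set X :=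
  {y | ∀ k : ℕ, dist ((⇑f)^[k] y) ((⇑f)^[k] x) ≤ c}

/-- The local unstable set of `x` of size `c`:
points whose backward iterates stay `c`-close to those of `x`. -/
def localUnstable (f : X ≃ₜ X) (c : ℝ) (x : X) : Set X :=
  {y | ∀ k : ℕ, dist ((⇑f.symm)^[k] y) ((⇑f.symm)^[k] x) ≤ c}

/-- The stable set of `x`. -/
def stableSet (f : X ≃ₜ X) (x : X) : Set X :=
  {y | Tendsto (fun k : ℕ => dist ((⇑f)^[k] y) ((⇑f)^[k] x)) atTop (nhds 0)}

/-- The unstable set of `x`. -/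
def unstableSet (f : X ≃ₜ X) (x : X) : Set X :=
  {y | Tendsto (fun k : ℕ => dist ((⇑f.symm)^[k] y) ((⇑f.symm)^[k] x)) atTop (nhds 0)}

/-- `f` is positively `n`-expansive: for some `c > 0` every local stable set of
size `c` contains at most `n` points. -/
def PosNExpansive (f : X ≃ₜ X) (n : ℕ) : Prop :=
  ∃ c > 0, ∀ x : X, ∀ S : Finset X, ↑S ⊆ localStable f c x → S.card ≤ n

/-- `f` is `n`-expansive: for some `c > 0` every dynamical ball of size `c`
contains at most `n` points. -/
def NExpansive (f : X ≃ₜ X) (n : ℕ) : Prop :=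
  ∃ c > 0, ∀ x : X, ∀ S : Finset X,
    ↑S ⊆ localStable f c x ∩ localUnstable f c x → S.card ≤ n

/-- `f` is expansive. -/
def Expansive (f : X ≃ₜ X) : Prop :=
  ∃ c > 0, ∀ x y : X, (∀ k : ℤ, dist (hIter f k x) (hIter f k y) ≤ c) → x = y

/-- `(x_k)_{k ∈ ℤ}` is a `δ`-pseudo-orbit. -/
def IsPseudoOrbit (f : X ≃ₜ X) (δ : ℝ) (x : ℤ → X) : Prop :=
  ∀ k : ℤ, dist (f (x k)) (x (k + 1)) < δ

/-- `(x_k)_{k ∈ ℤ}` is a two-sided limit pseudo-orbit: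
`d(f(x_k), x_{k+1}) → 0` as `|k| → ∞`. -/
def IsTwoSidedLimitPseudoOrbit (f : X ≃ₜ X) (x : ℤ → X) : Prop :=
  Tendsto (fun k : ℤ => dist (f (x k)) (x (k + 1))) cofinite (nhds 0)

/-- `z` `ε`-shadows the sequence `(x_k)_{k ∈ ℤ}`. -/
def Shadows (f : X ≃ₜ X) (ε : ℝ) (z : X) (x : ℤ → X) : Prop :=
  ∀ k : ℤ, dist (hIter f k z) (x k) < ε

/-- `z` two-sided limit shadows `(x_k)_{k ∈ ℤ}`. -/
def TwoSidedLimitShadows (f : X ≃ₜ X) (z : X) (x : ℤ → X) : Prop :=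
  Tendsto (fun k : ℤ => dist (hIter f k z) (x k)) cofinite (nhds 0)

/-- The shadowing property. -/
def ShadowingProperty (f : X ≃ₜ X) : Prop :=
  ∀ ε > 0, ∃ δ > 0, ∀ x : ℤ → X, IsPseudoOrbit f δ x → ∃ z : X, Shadows f ε z x

/-- The L-shadowing property. -/
def LShadowingProperty (f : X ≃ₜ X) : Prop :=
  ∀ ε > 0, ∃ δ > 0, ∀ x : ℤ → X, IsPseudoOrbit f δ x →
    IsTwoSidedLimitPseudoOrbit f x →
    ∃ z : X, Shadows f ε z x ∧ TwoSidedLimitShadows f z x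

/-- Topological transitivity. -/
def TopTransitive (f : X ≃ₜ X) : Prop :=
  ∀ U V : Set X, IsOpen U → IsOpen V → U.Nonempty → V.Nonempty →
    ∃ k : ℕ, ((⇑f)^[k] '' U ∩ V).Nonempty

/-- There is a nontrivial finite `ε`-pseudo-orbit from `x` to `y`. -/
def ChainFrom (f : X ≃ₜ X) (ε : ℝ) (x y : X) : Prop :=
  ∃ (l : ℕ) (c : ℕ → X), 0 < l ∧ c 0 = x ∧ c l = y ∧
    ∀ k < l, dist (f (c k)) (c (k + 1)) < ε

/-- `x` is a chain recurrent point of `f`. -/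
def ChainRecurrent (f : X ≃ₜ X) (x : X) : Prop :=
  ∀ ε > 0, ChainFrom f ε x x

/-- The chain recurrent class of `x`. -/
def chainClass (f : X ≃ₜ X) (x : X) : Set X :=
  {y | ∀ ε > 0, ChainFrom f ε x y ∧ ChainFrom f ε y x}

/-- `x` is a periodic point of `f`. -/
def Periodic (f : X ≃ₜ X) (x : X) : Prop :=
  ∃ k : ℕ, 1 ≤ k ∧ (⇑f)^[k] x = x

/-- `x` is a non-wandering point of `f`. -/
def NonWandering (f : X ≃ₜ X) (x : X) : Prop :=
  ∀ U : Set X, IsOpen U → x ∈ U → ∃ k : ℕ, 0 < k ∧ ((⇑f)^[k] '' U ∩ U).Nonempty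

/-- The omega limit set of `x`: accumulation points of the forward orbit. -/
def omegaLimitSet (f : X ≃ₜ X) (x : X) : Set X :=
  {y | ∃ φ : ℕ → ℕ, StrictMono φ ∧ Tendsto (fun n => (⇑f)^[φ n] x) atTop (nhds y)}

/-- `z` two-sided limit shadows `(x_k)` with gap `K`. -/
def TwoSidedLimitShadowsWithGap (f : X ≃ₜ X) (K : ℤ) (z : X) (x : ℤ → X) : Prop :=
  Tendsto (fun k : ℤ => dist (hIter f k z) (x k)) atBot (nhds 0) ∧
  Tendsto (fun k : ℤ => dist (hIter f (K + k) z) (x k)) atTop (nhds 0)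

lemma hIter_natCast (f : X ≃ₜ X) (n : ℕ) (x : X) : hIter f (n : ℤ) x = (⇑f)^[n] x := by
  simp only [hIter, zpow_natCast, ← Equiv.Perm.iterate_eq_pow]
  simp [Homeomorph.coe_toEquiv]

lemma hIter_neg_natCast (f : X ≃ₜ X) (n : ℕ) (x : X) :
    hIter f (-(n : ℤ)) x = (⇑f.symm)^[n] x := by
  simp only [hIter, zpow_neg, zpow_natCast, ← inv_pow, ← Equiv.Perm.iterate_eq_pow]
  have : ⇑(f.toEquiv⁻¹) = ⇑f.symm := rfl
  simp [this]

lemma hIter_add (f : X ≃ₜ X) (a b : ℤ) (x : X) :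
    hIter f (a + b) x = hIter f a (hIter f b x) := by
  simp only [hIter, zpow_add, Equiv.Perm.mul_apply]

lemma hIter_zero (f : X ≃ₜ X) (x : X) : hIter f 0 x = x := rfl

lemma hIter_one (f : X ≃ₜ X) (x : X) : hIter f 1 x = f x := rfl

lemma f_hIter (f : X ≃ₜ X) (k : ℤ) (x : X) : f (hIter f k x) = hIter f (k + 1) x := by
  rw [add_comm, hIter_add, hIter_one]

lemma hIter_injective (f : X ≃ₜ X) (k : ℤ) : Function.Injective (hIter f k) :=
  (f.toEquiv ^ k).injective

lemma hIter_continuous (f : X ≃ₜ X) (k : ℤ) : Continuous (hIter f k) := by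
  rcases Int.eq_nat_or_neg k with ⟨m, rfl | rfl⟩
  · have : hIter f (m : ℤ) = (⇑f)^[m] := funext fun x => hIter_natCast f m x
    rw [this]; exact f.continuous.iterate m
  · have : hIter f (-(m : ℤ)) = (⇑f.symm)^[m] := funext fun x => hIter_neg_natCast f m x
    rw [this]; exact f.symm.continuous.iterate m

lemma hIter_cancel (f : X ≃ₜ X) (a : ℤ) (x : X) : hIter f (-a) (hIter f a x) = x := by
  rw [← hIter_add]; simp [hIter_zero]

lemma iterate_hIter_comm (f : X ≃ₜ X) (k : ℤ) (m : ℕ) (x : X) :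
    (⇑f)^[m] (hIter f k x) = hIter f k ((⇑f)^[m] x) := by
  rw [← hIter_natCast, ← hIter_add, ← hIter_natCast f m x, ← hIter_add, add_comm]

lemma hIter_neg_mul_fixed (f : X ≃ₜ X) {L : ℕ} {x : X} (h : (⇑f)^[L] x = x) (m : ℕ) :
    hIter f (-((L * m : ℕ) : ℤ)) x = x := by
  induction m with
  | zero => simp [hIter_zero]
  | succ m ih =>
    have : -((L * (m+1) : ℕ) : ℤ) = (-((L * m : ℕ) : ℤ)) + (-(L : ℤ)) := by push_cast; ring
    rw [this, hIter_add]
    have hL : hIter f (-(L : ℤ)) x = x := by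
      rw [hIter_neg_natCast]
      nth_rewrite 1 [← h]
      have : Function.LeftInverse (⇑f.symm)^[L] ((⇑f)^[L]) :=
        (Function.LeftInverse.iterate (fun y => f.symm_apply_apply y) L)
      exact this x
    rw [hL, ih]

lemma finite_gap {P : Set X} (hP : P.Finite) :
    ∃ μ > 0, ∀ a ∈ P, ∀ b ∈ P, a ≠ b → μ ≤ dist a b := by
  classical
  have hfin : ((hP.toFinset ×ˢ hP.toFinset).filter fun p => p.1 ≠ p.2).Nonempty ∨
      ¬ ((hP.toFinset ×ˢ hP.toFinset).filter fun p => p.1 ≠ p.2).Nonempty := em _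
  rcases hfin with h | h
  · set T := ((hP.toFinset ×ˢ hP.toFinset).filter fun p => p.1 ≠ p.2) with hT
    set D := T.image fun p => dist p.1 p.2 with hD
    have hDne : D.Nonempty := h.image _
    refine ⟨D.min' hDne, ?_, ?_⟩
    · have hmem := D.min'_mem hDne
      obtain ⟨p, hp, hpd⟩ := Finset.mem_image.mp hmem
      have hp2 := (Finset.mem_filter.mp hp).2
      rw [← hpd]; exact dist_pos.mpr hp2
    · intro a ha b hb hab
      apply Finset.min'_le
      refine Finset.mem_image.mpr ⟨(a, b), ?_, rfl⟩
      rw [hT, Finset.mem_filter, Finset.mem_product]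
      exact ⟨⟨hP.mem_toFinset.mpr ha, hP.mem_toFinset.mpr hb⟩, hab⟩
  · refine ⟨1, one_pos, fun a ha b hb hab => absurd ?_ h⟩
    exact ⟨(a, b), by
      rw [Finset.mem_filter, Finset.mem_product]
      exact ⟨⟨hP.mem_toFinset.mpr ha, hP.mem_toFinset.mpr hb⟩, hab⟩⟩

lemma limitPO_of_finite_jumps (f : X ≃ₜ X) (po : ℤ → X) (s : Finset ℤ)
    (h : ∀ k ∉ s, f (po k) = po (k + 1)) : IsTwoSidedLimitPseudoOrbit f po := by
  refine tendsto_const_nhds.congr' ?_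
  rw [Filter.EventuallyEq, Filter.eventually_cofinite]
  apply Set.Finite.subset s.finite_toSet
  intro k hk
  simp only [Set.mem_setOf_eq] at hk
  by_contra hks
  exact hk (by rw [h k hks, dist_self])

/-- L-shadowing implies (plain) shadowing with non-strict bound. -/
lemma shadowing_of_L {X : Type*} [MetricSpace X] [CompactSpace X] {f : X ≃ₜ X}
    (hL : LShadowingProperty f) :
    ∀ ε > 0, ∃ δ > 0, ∀ po : ℤ → X, IsPseudoOrbit f δ po →
      ∃ z : X, ∀ k : ℤ, dist (hIter f k z) (po k) ≤ ε := by
  intro ε hε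
  obtain ⟨δ, hδ, hshad⟩ := hL ε hε
  refine ⟨δ, hδ, fun po hpo => ?_⟩
  -- truncated pseudo-orbits
  set poN : ℕ → ℤ → X := fun N k =>
    if k < -(N : ℤ) then hIter f (k + N) (po (-(N : ℤ)))
    else if k ≤ (N : ℤ) then po k
    else hIter f (k - N) (po (N : ℤ)) with hpoN
  have hval : ∀ N : ℕ, ∀ k : ℤ, -(N:ℤ) ≤ k → k ≤ N → poN N k = po k := by
    intro N k h1 h2
    simp only [hpoN]
    rw [if_neg (by omega), if_pos h2]
  have hPO : ∀ N, IsPseudoOrbit f δ (poN N) := by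
    intro N k
    rcases lt_trichotomy (k+1) (-(N:ℤ)) with h1 | h1 | h1
    · have hk : k < -(N:ℤ) := by omega
      simp only [hpoN, if_pos hk, if_pos h1]
      rw [f_hIter]
      have : k + (N:ℤ) + 1 = k + 1 + N := by ring
      rw [this, dist_self]; exact hδ
    · have hk : k < -(N:ℤ) := by omega
      simp only [hpoN, if_pos hk]
      rw [if_neg (by omega), if_pos (by omega), f_hIter]
      have : k + (N:ℤ) + 1 = 0 := by omega
      rw [this, hIter_zero, h1, dist_self]; exact hδ
    · rcases le_or_gt (k+1) (N:ℤ) with h2 | h2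
      · rw [hval N k (by omega) (by omega), hval N (k+1) (by omega) h2]
        exact hpo k
      · rcases lt_trichotomy k (N:ℤ) with h3 | h3 | h3
        · -- impossible: k < N and k+1 > N
          omega
        · rw [hval N k (by omega) (by omega)]
          simp only [hpoN]
          rw [if_neg (by omega), if_neg (by omega)]
          rw [h3]
          have h4 : (N:ℤ) + 1 - N = 1 := by ring
          rw [h4, hIter_one, dist_self]; exact hδ
        · simp only [hpoN]
          rw [if_neg (by omega), if_neg (by omega), if_neg (by omega), if_neg (by omega)]
          rw [f_hIter]
          have : k - (N:ℤ) + 1 = k + 1 - N := by ring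
          rw [this, dist_self]; exact hδ
  have hlim : ∀ N, IsTwoSidedLimitPseudoOrbit f (poN N) := by
    intro N
    apply limitPO_of_finite_jumps f _ (Finset.Icc (-(N:ℤ)) (N:ℤ))
    intro k hk
    rw [Finset.mem_Icc, not_and_or, not_le, not_le] at hk
    rcases hk with hk | hk
    · rcases eq_or_lt_of_le (show k + 1 ≤ -(N:ℤ) by omega) with h1 | h1
      · simp only [hpoN, if_pos hk]
        rw [if_neg (by omega), if_pos (by omega), f_hIter]
        have : k + (N:ℤ) + 1 = 0 := by omega
        rw [this, hIter_zero, h1]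
      · simp only [hpoN, if_pos hk, if_pos h1]
        rw [f_hIter]
        congr 1; ring
    · simp only [hpoN]
      rw [if_neg (by omega), if_neg (by omega), if_neg (by omega), if_neg (by omega), f_hIter]
      congr 1; ring
  choose zN hzN _ using fun N => hshad (poN N) (hPO N) (hlim N)
  obtain ⟨z, -, θ, hθ, hconv⟩ := isCompact_univ.tendsto_subseq (x := zN) (fun N => mem_univ _)
  refine ⟨z, fun k => ?_⟩
  have hc : Tendsto (fun m => dist (hIter f k (zN (θ m))) (po k)) atTop
      (nhds (dist (hIter f k z) (po k))) :=
    (((hIter_continuous f k).tendsto z).comp hconv).dist tendsto_const_nhds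
  apply le_of_tendsto hc
  filter_upwards [hθ.tendsto_atTop.eventually_ge_atTop k.natAbs] with m hm
  have h1 : -(↑(θ m):ℤ) ≤ k := by
    have := Int.natAbs_le_iff_mul_self_le.mp (le_refl k.natAbs); omega
  have h2 : k ≤ (θ m : ℤ) := by omega
  rw [← hval (θ m) k h1 h2]
  exact le_of_lt (hzN (θ m) k)

lemma omega_nonempty {X : Type*} [MetricSpace X] [CompactSpace X] (f : X ≃ₜ X) (y : X) :
    ∃ z, z ∈ omegaLimitSet f y := by
  obtain ⟨z, -, φ, hφ, hconv⟩ :=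
    isCompact_univ.tendsto_subseq (x := fun m => (⇑f)^[m] y) (fun m => mem_univ _)
  exact ⟨z, φ, hφ, hconv⟩

lemma omega_freq {X : Type*} [MetricSpace X] [CompactSpace X] (f : X ≃ₜ X) (y : X)
    {Q : ℕ → Prop} (hq : ∃ᶠ m in atTop, Q m) :
    ∃ z ∈ omegaLimitSet f y, ∃ ψ : ℕ → ℕ, StrictMono ψ ∧ (∀ m, Q (ψ m)) ∧
      Tendsto (fun m => (⇑f)^[ψ m] y) atTop (nhds z) := by
  obtain ⟨ψ₀, hψ₀, hQ⟩ := extraction_of_frequently_atTop hq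
  obtain ⟨z, -, θ, hθ, hconv⟩ :=
    isCompact_univ.tendsto_subseq (x := fun m => (⇑f)^[ψ₀ m] y) (fun m => mem_univ _)
  exact ⟨z, ⟨ψ₀ ∘ θ, hψ₀.comp hθ, hconv⟩, ψ₀ ∘ θ, hψ₀.comp hθ, fun m => hQ _, hconv⟩

lemma near_periodic {X : Type*} [MetricSpace X] [CompactSpace X] {f : X ≃ₜ X} {n : ℕ} {c : ℝ}
    (hc : 0 < c)
    (hcard : ∀ x : X, ∀ S : Finset X, ↑S ⊆ localStable f c x → S.card ≤ n)
    (hL : LShadowingProperty f)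
    {y z : X} (hz : z ∈ omegaLimitSet f y) :
    ∀ ε' > 0, ε' ≤ c → ∃ p : X, Periodic f p ∧ dist p z ≤ ε' := by
  classical
  intro ε' hε' hε'c
  obtain ⟨φ, hφ, hconv⟩ := hz
  obtain ⟨δ, hδ, hshad⟩ := shadowing_of_L hL (ε'/2) (by linarith)
  set γ := min (δ/3) (ε'/2) with hγdef
  have hγ : 0 < γ := lt_min (by linarith) (by linarith)
  obtain ⟨M, hM⟩ := (Metric.tendsto_atTop.mp hconv) γ hγ
  have hrs : φ M < φ (M+1) := hφ (lt_add_one M)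
  set l : ℕ := φ (M+1) - φ M with hldef
  have hl : 0 < l := by omega
  have hlz : (l:ℤ) ≠ 0 := by exact_mod_cast hl.ne'
  have hls : φ M + l = φ (M+1) := by omega
  set po : ℤ → X := fun k => (⇑f)^[φ M + (k % (l:ℤ)).toNat] y with hpodef
  have hPO : IsPseudoOrbit f δ po := by
    intro k
    have hm0 : 0 ≤ k % (l:ℤ) := Int.emod_nonneg k hlz
    have hml : k % (l:ℤ) < l := Int.emod_lt_of_pos k (by exact_mod_cast hl)
    have hfpo : f (po k) = (⇑f)^[φ M + (k % (l:ℤ)).toNat + 1] y := by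
      simp only [hpodef]
      rw [Function.iterate_succ_apply']
    have hk1 : (k + 1) % (l:ℤ) = (k % l + 1) % l := by
      conv_lhs => rw [show k + 1 = (k % (l:ℤ) + 1) + (l:ℤ) * (k / l) by
        rw [add_right_comm, Int.emod_add_mul_ediv k l]]
      rw [Int.add_mul_emod_self_left]
    by_cases hcase : k % (l:ℤ) + 1 < l
    · have h2 : (k + 1) % (l:ℤ) = k % l + 1 := by
        rw [hk1, Int.emod_eq_of_lt (by omega) hcase]
      have h3 : (k % (l:ℤ) + 1).toNat = (k % (l:ℤ)).toNat + 1 := by omega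
      have : po (k+1) = (⇑f)^[φ M + (k % (l:ℤ)).toNat + 1] y := by
        simp only [hpodef, h2, h3, add_assoc]
      rw [hfpo, this, dist_self]; exact hδ
    · have hceq : k % (l:ℤ) + 1 = l := by omega
      have h2 : (k + 1) % (l:ℤ) = 0 := by rw [hk1, hceq, Int.emod_self]
      have h3 : (k % (l:ℤ)).toNat + 1 = l := by omega
      have hpok1 : po (k+1) = (⇑f)^[φ M] y := by simp only [hpodef, h2]; norm_num
      have hpok : f (po k) = (⇑f)^[φ (M+1)] y := by
        rw [hfpo, add_assoc, h3, hls]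
      rw [hpok, hpok1]
      calc dist ((⇑f)^[φ (M+1)] y) ((⇑f)^[φ M] y)
          ≤ dist ((⇑f)^[φ (M+1)] y) z + dist ((⇑f)^[φ M] y) z := dist_triangle_right _ _ _
        _ < γ + γ := add_lt_add (hM (M+1) (by omega)) (hM M (le_refl M))
        _ ≤ δ/3 + δ/3 := add_le_add (min_le_left _ _) (min_le_left _ _)
        _ < δ := by linarith
  obtain ⟨w, hw⟩ := hshad po hPO
  set W : Fin (n+1) → X := fun i => hIter f (((i : ℕ) * l : ℕ) : ℤ) w with hWdef
  have hWpo : ∀ (i : Fin (n+1)) (t : ℕ),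
      (⇑f)^[t] (W i) = hIter f ((t : ℤ) + ((i:ℕ) * l : ℕ)) w := by
    intro i t
    simp only [hWdef]
    rw [← hIter_natCast, ← hIter_add]
  have hpoeq : ∀ (t : ℕ) (i : Fin (n+1)),
      po ((t : ℤ) + ((i:ℕ) * l : ℕ)) = po (t : ℤ) := by
    intro t i
    have : ((t : ℤ) + ((i:ℕ) * l : ℕ)) % l = (t : ℤ) % l := by
      push_cast
      rw [Int.add_mul_emod_self_right]
    simp only [hpodef, this]
  have hstable : ∀ i, W i ∈ localStable f c (W 0) := by
    intro i t
    rw [hWpo i t, hWpo 0 t]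
    have tri := dist_triangle (hIter f ((t : ℤ) + ((i:ℕ) * l : ℕ)) w)
      (po ((t : ℤ) + ((i:ℕ) * l : ℕ)))
      (hIter f ((t : ℤ) + (((0 : Fin (n+1)):ℕ) * l : ℕ)) w)
    refine tri.trans ?_
    have h2 : dist (po ((t : ℤ) + ((i:ℕ) * l : ℕ)))
        (hIter f ((t : ℤ) + (((0 : Fin (n+1)):ℕ) * l : ℕ)) w) ≤ ε'/2 := by
      rw [hpoeq t i, ← hpoeq t 0, dist_comm]
      exact hw _
    have h1 := hw ((t : ℤ) + ((i:ℕ) * l : ℕ))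
    linarith
  by_cases hinj : Function.Injective W
  · exfalso
    have hsub : ↑(Finset.image W Finset.univ) ⊆ localStable f c (W 0) := by
      intro a ha
      simp only [Finset.coe_image, Set.mem_image, Finset.mem_coe] at ha
      obtain ⟨i, -, rfl⟩ := ha
      exact hstable i
    have := hcard (W 0) _ hsub
    rw [Finset.card_image_of_injective _ hinj, Finset.card_univ, Fintype.card_fin] at this
    omega
  · rw [Function.not_injective_iff] at hinj
    obtain ⟨a, b, hab, hne⟩ := hinj
    -- wlog a*l < b*l
    have key : ∀ a b : Fin (n+1), (a:ℕ) < (b:ℕ) → W a = W b →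
        ∃ p : X, Periodic f p ∧ dist p z ≤ ε' := by
      intro a b hlt habW
      have hcancel : w = hIter f (((b:ℕ) * l - (a:ℕ) * l : ℕ) : ℤ) w := by
        have habW' : hIter f (((a:ℕ) * l : ℕ) : ℤ) w = hIter f (((b:ℕ) * l : ℕ) : ℤ) w := habW
        have hstep : w = hIter f (-((((a:ℕ) * l : ℕ)) : ℤ) + (((b:ℕ) * l : ℕ) : ℤ)) w := by
          rw [hIter_add, ← habW', hIter_cancel]
        have harg : (-((((a:ℕ) * l : ℕ)) : ℤ) + (((b:ℕ) * l : ℕ) : ℤ))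
            = (((b:ℕ) * l - (a:ℕ) * l : ℕ) : ℤ) := by
          have hle : (a:ℕ) * l ≤ (b:ℕ) * l := Nat.mul_le_mul_right l hlt.le
          omega
        rw [harg] at hstep
        exact hstep
      have hm1 : 1 ≤ (b:ℕ) * l - (a:ℕ) * l := by
        have : (a:ℕ) * l < (b:ℕ) * l := (Nat.mul_lt_mul_right hl).mpr hlt
        omega
      refine ⟨w, ⟨(b:ℕ) * l - (a:ℕ) * l, hm1, ?_⟩, ?_⟩
      · rw [← hIter_natCast]; exact hcancel.symm
      · have hpo0 : po 0 = (⇑f)^[φ M] y := by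
          simp only [hpodef, Int.zero_emod]; norm_num
        calc dist w z ≤ dist w (po 0) + dist (po 0) z := dist_triangle _ _ _
          _ ≤ ε'/2 + γ := by
              refine add_le_add ?_ ?_
              · have := hw 0; rw [hIter_zero] at this; exact this
              · rw [hpo0]; exact (hM M (le_refl M)).le
          _ ≤ ε' := by have := min_le_right (δ/3) (ε'/2); linarith
    rcases lt_trichotomy (a:ℕ) (b:ℕ) with h | h | h
    · exact key a b h hab
    · exact absurd (Fin.ext h) hne
    · exact key b a h hab.symm

lemma caseA {X : Type*} [MetricSpace X] [CompactSpace X] {f : X ≃ₜ X} {n : ℕ} {c : ℝ}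
    (hc : 0 < c)
    (hcard : ∀ x : X, ∀ S : Finset X, ↑S ⊆ localStable f c x → S.card ≤ n)
    (hL : LShadowingProperty f)
    (hPinf : {x : X | Periodic f x}.Infinite) : False := by
  classical
  obtain ⟨δ, hδ, hshad⟩ := hL c hc
  set e := hPinf.natEmbedding with hedef
  set seq : ℕ → X := fun m => (e m : X) with hseqdef
  have hseq_inj : Function.Injective seq := fun a b h => e.injective (Subtype.ext h)
  have hseqP : ∀ m, Periodic f (seq m) := fun m => (e m).2
  obtain ⟨x₀, -, θ, hθ, hconv⟩ := isCompact_univ.tendsto_subseq (x := seq) (fun m => mem_univ _)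
  obtain ⟨M, hM⟩ := (Metric.tendsto_atTop.mp hconv) (δ/2) (by linarith)
  set q : Fin (n+1) → X := fun i => seq (θ (M + (i:ℕ))) with hqdef
  have hqP : ∀ i, Periodic f (q i) := fun i => hseqP _
  have hq_inj : Function.Injective q := by
    intro a b h
    have h1 : θ (M + (a:ℕ)) = θ (M + (b:ℕ)) := hseq_inj h
    have h2 : M + (a:ℕ) = M + (b:ℕ) := hθ.injective h1
    exact Fin.ext (by omega)
  have hqd : ∀ i j, dist (q i) (q j) < δ := by
    intro i j
    calc dist (q i) (q j) ≤ dist (q i) x₀ + dist (q j) x₀ := dist_triangle_right _ _ _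
      _ < δ/2 + δ/2 := add_lt_add (hM _ (by omega)) (hM _ (by omega))
      _ = δ := by ring
  set po : Fin (n+1) → ℤ → X := fun i k => if k < 0 then hIter f k (q i) else hIter f k (q 0)
    with hpodef
  have hPO : ∀ i, IsPseudoOrbit f δ (po i) := by
    intro i k
    rcases lt_trichotomy (k+1) 0 with h1 | h1 | h1
    · simp only [hpodef]
      rw [if_pos (by omega), if_pos h1, f_hIter, dist_self]; exact hδ
    · simp only [hpodef]
      rw [if_pos (by omega), if_neg (by omega), f_hIter, h1, hIter_zero, hIter_zero]
      exact hqd i 0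
    · simp only [hpodef]
      rw [if_neg (by omega), if_neg (by omega), f_hIter, dist_self]; exact hδ
  have hlim : ∀ i, IsTwoSidedLimitPseudoOrbit f (po i) := by
    intro i
    apply limitPO_of_finite_jumps f _ {(-1 : ℤ)}
    intro k hk
    have hk1 : k ≠ -1 := by simpa using hk
    rcases lt_or_ge k (-1) with h | h
    · simp only [hpodef]
      rw [if_pos (by omega), if_pos (by omega), f_hIter]
    · simp only [hpodef]
      rw [if_neg (by omega), if_neg (by omega), f_hIter]
  choose z hzsh hztl using fun i => hshad (po i) (hPO i) (hlim i)
  have hzstable : ∀ i, z i ∈ localStable f c (q 0) := by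
    intro i t
    have := hzsh i (t : ℤ)
    have hpo : po i (t : ℤ) = hIter f (t : ℤ) (q 0) := by
      simp only [hpodef]; rw [if_neg (by omega)]
    rw [hpo] at this
    rw [← hIter_natCast f t (z i), ← hIter_natCast f t (q 0)]
    exact this.le
  have hz_inj : Function.Injective z := by
    intro i j hij
    by_contra hne
    set ι : ℕ → ℤ := fun m => -(m:ℤ) - 1 with hιdef
    have hι_inj : Function.Injective ι := by intro a b h; simp only [hιdef] at h; omega
    have hpoι : ∀ (i' : Fin (n+1)) (m : ℕ), po i' (ι m) = hIter f (ι m) (q i') := by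
      intro i' m
      simp only [hpodef, hιdef]
      rw [if_pos (by omega)]
    have htail : ∀ i' : Fin (n+1),
        Tendsto (fun m => dist (hIter f (ι m) (z i')) (hIter f (ι m) (q i'))) atTop (nhds 0) := by
      intro i'
      have h0 := (hztl i').comp hι_inj.tendsto_cofinite
      rw [Nat.cofinite_eq_atTop] at h0
      refine h0.congr fun m => ?_
      simp only [Function.comp_apply, hpoι i' m]
    set D : ℕ → ℝ := fun m => dist (hIter f (ι m) (q i)) (hIter f (ι m) (q j)) with hDdef
    have hD0 : Tendsto D atTop (nhds 0) := by
      have hi := htail i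
      have hj := htail j
      rw [← hij] at hj
      have hsum := hi.add hj
      rw [add_zero] at hsum
      refine squeeze_zero (fun m => dist_nonneg) (fun m => ?_) hsum
      simp only [hDdef]
      exact dist_triangle_left _ _ _
    obtain ⟨Li, hLi1, hLiq⟩ := hqP i
    obtain ⟨Lj, hLj1, hLjq⟩ := hqP j
    set L := Li * Lj with hLdef
    have hL0 : 0 < L := by positivity
    have hfixi : (⇑f)^[L] (q i) = q i := by
      rw [hLdef, Function.iterate_mul]
      exact Function.iterate_fixed hLiq Lj
    have hfixj : (⇑f)^[L] (q j) = q j := by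
      rw [hLdef, mul_comm, Function.iterate_mul]
      exact Function.iterate_fixed hLjq Li
    have hconst : ∀ m : ℕ, D (L * m) = dist (hIter f (-1) (q i)) (hIter f (-1) (q j)) := by
      intro m
      have harg : ι (L * m) = -1 + -((L * m : ℕ) : ℤ) := by simp only [hιdef]; push_cast; ring
      simp only [hDdef, harg, hIter_add, hIter_neg_mul_fixed f hfixi m,
        hIter_neg_mul_fixed f hfixj m]
    have hs : Tendsto (fun m => L * m) atTop atTop :=
      tendsto_atTop_mono (fun m => Nat.le_mul_of_pos_left m hL0) tendsto_id
    have hDc : Tendsto (fun m => D (L * m)) atTop (nhds 0) := hD0.comp hs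
    have hDc' : Tendsto (fun _ : ℕ => dist (hIter f (-1) (q i)) (hIter f (-1) (q j)))
        atTop (nhds 0) := hDc.congr fun m => hconst m
    have hd0 : dist (hIter f (-1) (q i)) (hIter f (-1) (q j)) = 0 :=
      tendsto_nhds_unique tendsto_const_nhds hDc'
    have := hIter_injective f (-1) (dist_eq_zero.mp hd0)
    exact hne (hq_inj this)
  have hsub : ↑(Finset.image z Finset.univ) ⊆ localStable f c (q 0) := by
    intro a ha
    simp only [Finset.coe_image, Set.mem_image, Finset.mem_coe] at ha
    obtain ⟨i, -, rfl⟩ := ha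
    exact hzstable i
  have hcard' := hcard (q 0) _ hsub
  rw [Finset.card_image_of_injective _ hz_inj, Finset.card_univ, Fintype.card_fin] at hcard'
  omega

lemma periodic_apply {X : Type*} [MetricSpace X] {f : X ≃ₜ X} {x : X}
    (h : Periodic f x) : Periodic f (f x) := by
  obtain ⟨k, hk, hfix⟩ := h
  exact ⟨k, hk, by rw [← Function.iterate_succ_apply, Function.iterate_succ_apply', hfix]⟩

lemma periodic_hIter {X : Type*} [MetricSpace X] {f : X ≃ₜ X} {x : X} (k : ℤ)
    (h : Periodic f x) : Periodic f (hIter f k x) := by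
  obtain ⟨m, hm, hfix⟩ := h
  exact ⟨m, hm, by rw [iterate_hIter_comm, hfix]⟩

lemma phase_lock {X : Type*} [MetricSpace X] [CompactSpace X] {f : X ≃ₜ X} {n : ℕ} {c : ℝ}
    (hc : 0 < c)
    (hcard : ∀ x : X, ∀ S : Finset X, ↑S ⊆ localStable f c x → S.card ≤ n)
    (hL : LShadowingProperty f)
    (hPfin : {x : X | Periodic f x}.Finite)
    {δ : ℝ} (hδ : 0 < δ) (y : X) :
    ∃ ρ : X, Periodic f ρ ∧ ∀ᶠ k in atTop, dist ((⇑f)^[k] y) ((⇑f)^[k] ρ) < δ := by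
  classical
  -- every omega-limit point is periodic
  have hωP : ∀ z ∈ omegaLimitSet f y, Periodic f z := by
    intro z hz
    have hnear : ∀ m : ℕ, ∃ p : X, Periodic f p ∧ dist p z ≤ min c (1/(m+1)) := by
      intro m
      refine near_periodic hc hcard hL hz _ ?_ (min_le_left _ _)
      have : (0:ℝ) < 1/(m+1) := by positivity
      exact lt_min hc this
    choose p hpP hpd using hnear
    haveI := hPfin.to_subtype
    obtain ⟨p₀, hfib⟩ := Finite.exists_infinite_fiber
      (fun m => (⟨p m, hpP m⟩ : {x : X | Periodic f x}))
    have hfib' : ((fun m => (⟨p m, hpP m⟩ : {x : X | Periodic f x})) ⁻¹' {p₀}).Infinite :=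
      Set.infinite_coe_iff.mp hfib
    have hz0 : z = (p₀ : X) := by
      have hd : dist (p₀ : X) z = 0 := by
        by_contra hd0
        have hη : 0 < dist (p₀ : X) z := lt_of_le_of_ne dist_nonneg (Ne.symm hd0)
        set η := dist (p₀ : X) z with hηd
        obtain ⟨m, hmmem, hmgt⟩ := hfib'.exists_gt (Nat.ceil (1/η))
        have hpm : p m = (p₀ : X) := by
          have : (⟨p m, hpP m⟩ : {x : X | Periodic f x}) = p₀ := hmmem
          exact congrArg Subtype.val this
        have h1 : dist (p₀ : X) z ≤ 1/(m+1) := by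
          rw [← hpm]
          exact (hpd m).trans (min_le_right _ _)
        have h2 : 1/((m:ℝ)+1) < η := by
          rw [div_lt_iff₀ (by positivity)]
          have hceil : 1/η ≤ (Nat.ceil (1/η) : ℝ) := Nat.le_ceil _
          have hmc : (Nat.ceil (1/η) : ℝ) < m := by exact_mod_cast hmgt
          have h3 : 1/η < (m:ℝ)+1 := by linarith
          calc (1:ℝ) = η * (1/η) := by field_simp
            _ < η * ((m:ℝ)+1) := mul_lt_mul_of_pos_left h3 hη
        linarith
      exact (dist_eq_zero.mp hd).symm
    rw [hz0]
    exact p₀.2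
  -- gap of the finite periodic set
  obtain ⟨μ, hμ, hgap⟩ := finite_gap hPfin
  -- uniform continuity of f
  obtain ⟨η₁, hη₁, huc⟩ := Metric.uniformContinuous_iff.mp
    (CompactSpace.uniformContinuous_of_continuous f.continuous) (μ/3) (by linarith)
  set η := min (min (δ/2) (μ/3)) η₁ with hηdef
  have hη : 0 < η := lt_min (lt_min (by linarith) (by linarith)) hη₁
  -- eventually the orbit is η-close to a periodic point
  have hev : ∀ᶠ k in atTop, ∃ p, Periodic f p ∧ dist ((⇑f)^[k] y) p < η := by
    by_contra hcon
    rw [Filter.not_eventually] at hcon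
    obtain ⟨z, hzω, ψ, hψ, hQ, hconv⟩ := omega_freq f y hcon
    have hzP := hωP z hzω
    obtain ⟨M, hM⟩ := Metric.tendsto_atTop.mp hconv η hη
    exact hQ M ⟨z, hzP, hM M le_rfl⟩
  obtain ⟨K, hK⟩ := eventually_atTop.mp hev
  have hsel : ∀ m : ℕ, ∃ p, Periodic f p ∧ dist ((⇑f)^[K + m] y) p < η :=
    fun m => hK (K + m) (by omega)
  choose s hsP hsd using hsel
  have htrans : ∀ m, s (m+1) = f (s m) := by
    intro m
    have h1 : dist ((⇑f)^[K + (m+1)] y) (s (m+1)) < η := hsd (m+1)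
    have h2 : dist ((⇑f)^[K + (m+1)] y) (f (s m)) < μ/3 := by
      have he : (⇑f)^[K + (m+1)] y = f ((⇑f)^[K + m] y) := by
        rw [show K + (m+1) = (K+m)+1 by omega, Function.iterate_succ_apply']
      rw [he]
      refine huc ((hsd m).trans_le ?_)
      exact min_le_right _ _
    by_contra hne
    have hge := hgap _ (hsP (m+1)) _ (periodic_apply (hsP m)) hne
    have hlt : dist (s (m+1)) (f (s m)) < μ := by
      have htri : dist (s (m+1)) (f (s m)) ≤
          dist ((⇑f)^[K + (m+1)] y) (s (m+1)) + dist ((⇑f)^[K + (m+1)] y) (f (s m)) :=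
        dist_triangle_left _ _ _
      have hημ : η ≤ μ/3 := le_trans (min_le_left _ _) (min_le_right _ _)
      linarith
    linarith
  have hiter : ∀ m, s m = (⇑f)^[m] (s 0) := by
    intro m
    induction m with
    | zero => simp
    | succ m ih =>
        rw [htrans m, ih]
        exact (Function.iterate_succ_apply' _ _ _).symm
  refine ⟨hIter f (-(K:ℤ)) (s 0), periodic_hIter _ (hsP 0), ?_⟩
  rw [eventually_atTop]
  refine ⟨K, fun k hk => ?_⟩
  have hFρ : (⇑f)^[k] (hIter f (-(K:ℤ)) (s 0)) = s (k - K) := by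
    rw [← hIter_natCast, ← hIter_add]
    have harg : (k:ℤ) + -(K:ℤ) = ((k - K : ℕ) : ℤ) := by omega
    rw [harg, hIter_natCast, ← hiter]
  rw [hFρ]
  have hd := hsd (k - K)
  have hkK : K + (k - K) = k := by omega
  rw [hkK] at hd
  have hηδ : η ≤ δ/2 := le_trans (min_le_left _ _) (min_le_left _ _)
  linarith

lemma caseB {X : Type*} [MetricSpace X] [CompactSpace X] [Infinite X] {f : X ≃ₜ X} {n : ℕ}
    {c : ℝ} (hc : 0 < c)
    (hcard : ∀ x : X, ∀ S : Finset X, ↑S ⊆ localStable f c x → S.card ≤ n)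
    (hL : LShadowingProperty f)
    (hPfin : {x : X | Periodic f x}.Finite) : False := by
  classical
  obtain ⟨δ, hδ, hshad⟩ := hL (c/4) (by linarith)
  choose ρfn hρP hρev using fun y : X => phase_lock hc hcard hL hPfin hδ y
  haveI := hPfin.to_subtype
  obtain ⟨ρ₀, hfib⟩ := Finite.exists_infinite_fiber
    (fun y : X => (⟨ρfn y, hρP y⟩ : {x : X | Periodic f x}))
  set Y : Set X := (fun y : X => (⟨ρfn y, hρP y⟩ : {x : X | Periodic f x})) ⁻¹' {ρ₀} with hYdef
  have hYinf : Y.Infinite := Set.infinite_coe_iff.mp hfib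
  set ρ : X := (ρ₀ : X) with hρdef
  have hYev : ∀ y ∈ Y, ∀ᶠ k in atTop, dist ((⇑f)^[k] y) ((⇑f)^[k] ρ) < δ := by
    intro y hy
    have : ρfn y = ρ := congrArg Subtype.val (hy : _ = ρ₀)
    rw [← this]
    exact hρev y
  have locfin : ∀ x : X, (localStable f c x).Finite := by
    intro x
    by_contra hinf
    obtain ⟨S, hS, hScard⟩ := Set.Infinite.exists_subset_card_eq hinf (n+1)
    have := hcard x S hS
    omega
  -- greedily select n+1 points of Y pairwise separated at some forward time
  have greedy : ∀ m : ℕ, ∃ S : Finset X, ↑S ⊆ Y ∧ S.card = m ∧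
      ∀ a ∈ S, ∀ b ∈ S, a ≠ b → ∃ t : ℕ, c < dist ((⇑f)^[t] a) ((⇑f)^[t] b) := by
    intro m
    induction m with
    | zero => exact ⟨∅, by simp, rfl, by simp⟩
    | succ m ih =>
      obtain ⟨S, hSY, hScard, hSpair⟩ := ih
      set bad : Finset X := S ∪ S.biUnion (fun a => (locfin a).toFinset) with hbaddef
      obtain ⟨y, hyY, hybad⟩ := hYinf.exists_notMem_finset bad
      have hyS : y ∉ S := fun h => hybad (Finset.mem_union_left _ h)
      have hysep : ∀ b ∈ S, ∃ t : ℕ, c < dist ((⇑f)^[t] y) ((⇑f)^[t] b) := by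
        intro b hb
        have hnot : y ∉ localStable f c b := by
          intro hmem
          exact hybad (Finset.mem_union_right _
            (Finset.mem_biUnion.mpr ⟨b, hb, (locfin b).mem_toFinset.mpr hmem⟩))
        rw [localStable, Set.mem_setOf_eq] at hnot
        push_neg at hnot
        obtain ⟨t, ht⟩ := hnot
        exact ⟨t, ht⟩
      refine ⟨insert y S, ?_, ?_, ?_⟩
      · rw [Finset.coe_insert]
        exact Set.insert_subset hyY hSY
      · rw [Finset.card_insert_of_notMem hyS, hScard]
      · intro a ha b hb hab
        rw [Finset.mem_insert] at ha hb
        rcases ha with rfl | ha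
        · rcases hb with rfl | hb
          · exact absurd rfl hab
          · exact hysep b hb
        · rcases hb with rfl | hb
          · obtain ⟨t, ht⟩ := hysep a ha
            exact ⟨t, by rw [dist_comm]; exact ht⟩
          · exact hSpair a ha b hb hab
  obtain ⟨S, hSY, hScard, hSpair⟩ := greedy (n+1)
  set eqv := S.equivFinOfCardEq hScard with heqvdef
  set ys : Fin (n+1) → X := fun i => (eqv.symm i : X) with hysdef
  have hys_inj : Function.Injective ys := by
    intro a b h
    exact eqv.symm.injective (Subtype.ext h)
  have hysS : ∀ i, ys i ∈ S := fun i => (eqv.symm i).2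
  have hysY : ∀ i, ys i ∈ Y := fun i => hSY (hysS i)
  have hpair : ∀ i j : Fin (n+1), i ≠ j → ∃ t : ℕ, c < dist ((⇑f)^[t] (ys i)) ((⇑f)^[t] (ys j)) :=
    fun i j hij => hSpair _ (hysS i) _ (hysS j) (fun h => hij (hys_inj h))
  set g : Fin (n+1) × Fin (n+1) → ℕ := fun p =>
    if h : ∃ t : ℕ, c < dist ((⇑f)^[t] (ys p.1)) ((⇑f)^[t] (ys p.2)) then h.choose else 0
    with hgdef
  set B := Finset.univ.sup g with hBdef
  have hB : ∀ i j : Fin (n+1), i ≠ j →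
      ∃ t ≤ B, c < dist ((⇑f)^[t] (ys i)) ((⇑f)^[t] (ys j)) := by
    intro i j hij
    have hex := hpair i j hij
    refine ⟨g (i, j), ?_, ?_⟩
    · exact Finset.le_sup (Finset.mem_univ (i, j))
    · simp only [hgdef, dif_pos hex]
      exact hex.choose_spec
  choose N hN using fun i => eventually_atTop.mp (hYev (ys i) (hysY i))
  set T : Fin (n+1) → ℕ := fun i => max (N i) B with hTdef
  set Tstar := Finset.univ.sup T with hTstardef
  have hTB : ∀ i, B ≤ T i := fun i => le_max_right _ _
  have hTN : ∀ i, N i ≤ T i := fun i => le_max_left _ _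
  have hTT : ∀ i, T i ≤ Tstar := fun i => Finset.le_sup (Finset.mem_univ i)
  set po : Fin (n+1) → ℤ → X := fun i k =>
    if k ≤ (T i : ℤ) then hIter f k (ys i) else hIter f k ρ with hpodef
  have hPO : ∀ i, IsPseudoOrbit f δ (po i) := by
    intro i k
    rcases lt_trichotomy k (T i : ℤ) with h1 | h1 | h1
    · simp only [hpodef]
      rw [if_pos (by omega), if_pos (by omega), f_hIter, dist_self]; exact hδ
    · simp only [hpodef]
      rw [if_pos (by omega), if_neg (by omega), f_hIter, h1]
      have harg : ((T i : ℤ) + 1) = ((T i + 1 : ℕ) : ℤ) := by omega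
      have e1 : hIter f ((T i : ℤ) + 1) (ys i) = (⇑f)^[T i + 1] (ys i) := by
        rw [harg, hIter_natCast]
      have e2 : hIter f ((T i : ℤ) + 1) ρ = (⇑f)^[T i + 1] ρ := by
        rw [harg, hIter_natCast]
      rw [e1, e2]
      exact hN i (T i + 1) (by have := hTN i; omega)
    · simp only [hpodef]
      rw [if_neg (by omega), if_neg (by omega), f_hIter, dist_self]; exact hδ
  have hlim : ∀ i, IsTwoSidedLimitPseudoOrbit f (po i) := by
    intro i
    apply limitPO_of_finite_jumps f _ {(T i : ℤ)}
    intro k hk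
    have hk1 : k ≠ (T i : ℤ) := by simpa using hk
    rcases lt_or_ge k (T i : ℤ) with h | h
    · simp only [hpodef]
      rw [if_pos (by omega), if_pos (by omega), f_hIter]
    · simp only [hpodef]
      rw [if_neg (by omega), if_neg (by omega), f_hIter]
  choose u hush hutl using fun i => hshad (po i) (hPO i) (hlim i)
  set base : X := (⇑f)^[Tstar + 1] ρ with hbasedef
  set v : Fin (n+1) → X := fun i => (⇑f)^[Tstar + 1] (u i) with hvdef
  have hiterboth : ∀ (x : X) (t : ℕ), (⇑f)^[t] ((⇑f)^[Tstar+1] x)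
      = hIter f ((t + (Tstar + 1) : ℕ) : ℤ) x := by
    intro x t
    rw [← Function.iterate_add_apply, hIter_natCast]
  have hvstable : ∀ i, v i ∈ localStable f c base := by
    intro i t
    simp only [hvdef, hbasedef]
    rw [hiterboth (u i) t, hiterboth ρ t]
    have hpoval : po i ((t + (Tstar + 1) : ℕ) : ℤ) = hIter f ((t + (Tstar + 1) : ℕ) : ℤ) ρ := by
      simp only [hpodef]
      rw [if_neg (by push_cast; have := hTT i; omega)]
    have := hush i ((t + (Tstar + 1) : ℕ) : ℤ)
    rw [hpoval] at this
    have hc4 : c/4 ≤ c := by linarith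
    exact this.le.trans hc4
  have hv_inj : Function.Injective v := by
    intro i j hvij
    by_contra hne
    have huij : u i = u j := (f.injective.iterate (Tstar+1)) hvij
    obtain ⟨t, htB, htc⟩ := hB i j hne
    have hti : (t : ℤ) ≤ (T i : ℤ) := by have := hTB i; omega
    have htj : (t : ℤ) ≤ (T j : ℤ) := by have := hTB j; omega
    have hpoit : po i (t : ℤ) = hIter f (t : ℤ) (ys i) := by
      simp only [hpodef]; rw [if_pos hti]
    have hpojt : po j (t : ℤ) = hIter f (t : ℤ) (ys j) := by
      simp only [hpodef]; rw [if_pos htj]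
    have h1 := hush i (t : ℤ)
    have h2 := hush j (t : ℤ)
    rw [hpoit] at h1
    rw [hpojt] at h2
    rw [huij] at h1
    have htri : dist (hIter f (t:ℤ) (ys i)) (hIter f (t:ℤ) (ys j)) ≤
        dist (hIter f (t:ℤ) (u j)) (hIter f (t:ℤ) (ys i)) +
        dist (hIter f (t:ℤ) (u j)) (hIter f (t:ℤ) (ys j)) := dist_triangle_left _ _ _
    rw [dist_comm] at h1
    have hlt : dist (hIter f (t:ℤ) (ys i)) (hIter f (t:ℤ) (ys j)) < c/2 := by
      rw [dist_comm (hIter f (t:ℤ) (u j))] at htri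
      linarith
    rw [hIter_natCast, hIter_natCast] at hlt
    linarith
  have hsub : ↑(Finset.image v Finset.univ) ⊆ localStable f c base := by
    intro a ha
    simp only [Finset.coe_image, Set.mem_image, Finset.mem_coe] at ha
    obtain ⟨i, -, rfl⟩ := ha
    exact hvstable i
  have hcard' := hcard base _ hsub
  rw [Finset.card_image_of_injective _ hv_inj, Finset.card_univ, Fintype.card_fin] at hcard'
  omega

theorem stmt0 {X : Type*} [MetricSpace X] [CompactSpace X] (f : X ≃ₜ X) (n : ℕ)
    (hn : 0 < n) (hexp : PosNExpansive f n) (hL : LShadowingProperty f) :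
    Finite X := by
  by_contra hfin
  haveI : Infinite X := not_finite_iff_infinite.mp hfin
  obtain ⟨c, hc, hcard⟩ := hexp
  by_cases hP : {x : X | Periodic f x}.Finite
  · exact caseB hc hcard hL hP
  · exact caseA hc hcard hL hP
end

section
/- Let f be a homeomorphism of a compact metric space (X,d) and let n be a positive integer. If f is n-expansive and has the L-shadowing property, then there exists ε > 0 such that for every x ∈ X the following holds: whenever U is a finite subset of W^u_ε(x) whose points pairwise belong to different unstable sets (i.e., q ∉ W^u(q') for all distinct q, q' ∈ U) and S is a finite subset of W^s_ε(x) whose points pairwise belong to different stable sets (i.e., p ∉ W^s(p') for all distinct p, p' ∈ S), then |U| · |S| ≤ n. -/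
open Metric Filter Set

variable {X : Type*} [MetricSpace X]

lemma hIter_add_one (f : X ≃ₜ X) (k : ℤ) (x : X) : hIter f (k+1) x = f (hIter f k x) := by
  have h : f.toEquiv ^ (k+1) = f.toEquiv * f.toEquiv ^ k := by
    rw [add_comm, zpow_add, zpow_one]
  simp [hIter, h]
lemma key (f : X ≃ₜ X) {δ ε' : ℝ}
    (hLs : ∀ x : ℤ → X, IsPseudoOrbit f δ x → IsTwoSidedLimitPseudoOrbit f x →
      ∃ z, Shadows f ε' z x ∧ TwoSidedLimitShadows f z x)
    (q p : X) (hqp : dist (f q) (f p) < δ) :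
    ∃ z : X, z ∈ unstableSet f q ∧ z ∈ stableSet f p ∧
      (∀ k : ℕ, dist ((⇑f.symm)^[k] z) ((⇑f.symm)^[k] q) < ε') ∧
      dist z q < ε' ∧ ∀ k : ℕ, 1 ≤ k → dist ((⇑f)^[k] z) ((⇑f)^[k] p) < ε' := by
  have hδ : 0 < δ := dist_nonneg.trans_lt hqp
  set o : ℤ → X := fun k => if k ≤ 0 then hIter f k q else hIter f k p with ho
  have hxle : ∀ k : ℤ, k ≤ 0 → o k = hIter f k q := fun k hk => if_pos hk
  have hxgt : ∀ k : ℤ, 0 < k → o k = hIter f k p := fun k hk => if_neg (not_le.2 hk)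
  have hZero : ∀ k : ℤ, k ≠ 0 → dist (f (o k)) (o (k+1)) = 0 := by
    intro k hk
    rcases lt_or_gt_of_ne hk with h | h
    · rw [hxle k h.le, hxle (k+1) (by omega), hIter_add_one, dist_self]
    · rw [hxgt k h, hxgt (k+1) (by omega), hIter_add_one, dist_self]
  have hPO : IsPseudoOrbit f δ o := by
    intro k
    rcases eq_or_ne k 0 with rfl | hk
    · have h0 : o 0 = q := by rw [hxle 0 le_rfl, hIter_zero]
      have h1 : o 1 = f p := by rw [hxgt 1 one_pos, hIter_one]
      rw [h0]; rw [show (0:ℤ)+1 = 1 by ring, h1]; exact hqp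
    · rw [hZero k hk]; exact hδ
  have hTS : IsTwoSidedLimitPseudoOrbit f o := by
    unfold IsTwoSidedLimitPseudoOrbit
    refine (tendsto_const_nhds : Tendsto (fun _ : ℤ => (0:ℝ)) cofinite (nhds 0)).congr' ?_
    rw [Filter.EventuallyEq, Filter.eventually_cofinite]
    apply Set.Finite.subset (Set.finite_singleton 0)
    intro k hk
    simp only [Set.mem_setOf_eq] at hk
    by_contra hk0
    exact hk ((hZero k hk0).symm)
  obtain ⟨z, hsh, hlim⟩ := hLs o hPO hTS
  have hshadneg : ∀ m : ℕ, dist ((⇑f.symm)^[m] z) ((⇑f.symm)^[m] q) < ε' := by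
    intro m
    have h := hsh (-(m:ℤ))
    rwa [hxle _ (by omega), hIter_neg_natCast, hIter_neg_natCast] at h
  have hdzq : dist z q < ε' := by simpa using hshadneg 0
  have hshadpos : ∀ m : ℕ, 1 ≤ m → dist ((⇑f)^[m] z) ((⇑f)^[m] p) < ε' := by
    intro m hm
    have h := hsh (m:ℤ)
    rwa [hxgt _ (by exact_mod_cast hm), hIter_natCast, hIter_natCast] at h
  have hbot : Tendsto (fun k : ℤ => dist (hIter f k z) (o k)) atBot (nhds 0) :=
    hlim.mono_left (by rw [Int.cofinite_eq]; exact le_sup_left)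
  have htop : Tendsto (fun k : ℤ => dist (hIter f k z) (o k)) atTop (nhds 0) :=
    hlim.mono_left (by rw [Int.cofinite_eq]; exact le_sup_right)
  have hneg : Tendsto (fun m : ℕ => -(m:ℤ)) atTop atBot :=
    tendsto_neg_atTop_atBot.comp tendsto_natCast_atTop_atTop
  have hu : z ∈ unstableSet f q := by
    show Tendsto _ atTop (nhds 0)
    apply (hbot.comp hneg).congr
    intro m
    simp only [Function.comp_apply]
    rw [hxle _ (by omega), hIter_neg_natCast, hIter_neg_natCast]
  have hs : z ∈ stableSet f p := by
    show Tendsto _ atTop (nhds 0)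
    apply Filter.Tendsto.congr' _ (htop.comp (tendsto_natCast_atTop_atTop (R := ℤ)))
    filter_upwards [eventually_ge_atTop 1] with m hm
    simp only [Function.comp_apply]
    rw [hxgt _ (by exact_mod_cast hm), hIter_natCast, hIter_natCast]
  exact ⟨z, hu, hs, hshadneg, hdzq, hshadpos⟩

lemma unstable_trans {f : X ≃ₜ X} {z q q' : X} (h1 : z ∈ unstableSet f q)
    (h2 : z ∈ unstableSet f q') : q ∈ unstableSet f q' := by
  apply squeeze_zero (fun k => dist_nonneg) (fun k => dist_triangle_left _ _ _)
  simpa using h1.add h2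

lemma stable_trans {f : X ≃ₜ X} {z p p' : X} (h1 : z ∈ stableSet f p)
    (h2 : z ∈ stableSet f p') : p ∈ stableSet f p' := by
  apply squeeze_zero (fun k => dist_nonneg) (fun k => dist_triangle_left _ _ _)
  simpa using h1.add h2


theorem stmt2 {X : Type*} [MetricSpace X] [CompactSpace X] (f : X ≃ₜ X) (n : ℕ)
    (hn : 0 < n) (hexp : NExpansive f n) (hL : LShadowingProperty f) :
    ∃ ε > 0, ∀ x : X, ∀ U S : Finset X,
      ↑U ⊆ localUnstable f ε x →
      (∀ q ∈ U, ∀ q' ∈ U, q ≠ q' → q ∉ unstableSet f q') →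
      ↑S ⊆ localStable f ε x →
      (∀ p ∈ S, ∀ p' ∈ S, p ≠ p' → p ∉ stableSet f p') →
      U.card * S.card ≤ n := by
  classical
  obtain ⟨c, hc, hcard⟩ := hexp
  obtain ⟨δ, hδ, hLs⟩ := hL (c/2) (by linarith)
  have hf : UniformContinuous (⇑f) :=
    CompactSpace.uniformContinuous_of_continuous f.continuous
  obtain ⟨ε₁, hε₁, hfδ⟩ := Metric.uniformContinuous_iff.mp hf δ hδ
  set ε := min (ε₁/3) (c/2) with hε
  have hεpos : 0 < ε := by positivity
  have hεc : ε ≤ c/2 := min_le_right _ _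
  have hεε₁ : ε ≤ ε₁/3 := min_le_left _ _
  refine ⟨ε, hεpos, ?_⟩
  intro x U S hU hUdist hS hSdist
  set P : X × X → X → Prop := fun a z =>
    z ∈ unstableSet f a.1 ∧ z ∈ stableSet f a.2 ∧
      (∀ k : ℕ, dist ((⇑f.symm)^[k] z) ((⇑f.symm)^[k] a.1) < c/2) ∧
      dist z a.1 < c/2 ∧ ∀ k : ℕ, 1 ≤ k → dist ((⇑f)^[k] z) ((⇑f)^[k] a.2) < c/2 with hP
  have hex : ∀ a ∈ U ×ˢ S, ∃ z, P a z := by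
    rintro ⟨q, p⟩ ha
    rw [Finset.mem_product] at ha
    have hqx : dist q x ≤ ε := by simpa using hU ha.1 0
    have hpx : dist p x ≤ ε := by simpa using hS ha.2 0
    have hqp : dist q p < ε₁ := by
      calc dist q p ≤ dist q x + dist p x := dist_triangle_right _ _ _
        _ ≤ ε + ε := add_le_add hqx hpx
        _ < ε₁ := by linarith [hεε₁]
    exact key f hLs q p (hfδ hqp)
  set g : X × X → X := fun a => if h : ∃ z, P a z then h.choose else x with hg
  have hgP : ∀ a ∈ U ×ˢ S, P a (g a) := by
    intro a ha
    have h := hex a ha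
    simp only [hg, dif_pos h]
    exact h.choose_spec
  set T : Finset X := (U ×ˢ S).image g with hT
  have hTsub : ↑T ⊆ localStable f c x ∩ localUnstable f c x := by
    intro y hy
    simp only [hT, Finset.coe_image, Set.mem_image, Finset.mem_coe] at hy
    obtain ⟨a, ha, rfl⟩ := hy
    obtain ⟨hu, hs, hneg, hd0, hpos⟩ := hgP a ha
    rw [Finset.mem_product] at ha
    have hqx : ∀ k : ℕ, dist ((⇑f.symm)^[k] a.1) ((⇑f.symm)^[k] x) ≤ ε := hU ha.1
    have hpx : ∀ k : ℕ, dist ((⇑f)^[k] a.2) ((⇑f)^[k] x) ≤ ε := hS ha.2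
    constructor
    · intro k
      rcases Nat.eq_zero_or_pos k with rfl | hk
      · have hq0 : dist a.1 x ≤ ε := by simpa using hqx 0
        simp only [Function.iterate_zero, id]
        calc dist (g a) x ≤ dist (g a) a.1 + dist a.1 x := dist_triangle _ _ _
          _ ≤ c/2 + c/2 := add_le_add hd0.le (hq0.trans hεc)
          _ = c := by ring
      · calc dist ((⇑f)^[k] (g a)) ((⇑f)^[k] x)
            ≤ dist ((⇑f)^[k] (g a)) ((⇑f)^[k] a.2) + dist ((⇑f)^[k] a.2) ((⇑f)^[k] x) :=
              dist_triangle _ _ _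
          _ ≤ c/2 + c/2 := add_le_add (hpos k hk).le ((hpx k).trans hεc)
          _ = c := by ring
    · intro k
      calc dist ((⇑f.symm)^[k] (g a)) ((⇑f.symm)^[k] x)
          ≤ dist ((⇑f.symm)^[k] (g a)) ((⇑f.symm)^[k] a.1)
            + dist ((⇑f.symm)^[k] a.1) ((⇑f.symm)^[k] x) := dist_triangle _ _ _
        _ ≤ c/2 + c/2 := add_le_add (hneg k).le ((hqx k).trans hεc)
        _ = c := by ring
  have hinj : Set.InjOn g ↑(U ×ˢ S) := by
    rintro ⟨q, p⟩ ha ⟨q', p'⟩ hb hab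
    simp only [Finset.coe_product, Set.mem_prod, Finset.mem_coe] at ha hb
    obtain ⟨hu, hs, -⟩ := hgP (q, p) (Finset.mem_product.mpr ha)
    obtain ⟨hu', hs', -⟩ := hgP (q', p') (Finset.mem_product.mpr hb)
    rw [hab] at hu hs
    have hq : q = q' := by
      by_contra hne
      exact hUdist q ha.1 q' hb.1 hne (unstable_trans hu hu')
    have hp : p = p' := by
      by_contra hne
      exact hSdist p ha.2 p' hb.2 hne (stable_trans hs hs')
    rw [hq, hp]
  calc U.card * S.card = (U ×ˢ S).card := (Finset.card_product U S).symm
    _ = T.card := (Finset.card_image_of_injOn hinj).symm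
    _ ≤ n := hcard x T hTsub
end

section
/- Let f be a homeomorphism of a compact metric space (X,d) and let n be a positive integer. If f is positively n-expansive, then the non-wandering set Ω(f) is finite if, and only if, X is finite. -/
open Metric Filter Set

variable {X : Type*} [MetricSpace X]

section Aux

variable [CompactSpace X]

lemma sep_of_finite {s : Set X} (hs : s.Finite) :
    ∃ ε > 0, ∀ a ∈ s, ∀ b ∈ s, dist a b < 3 * ε → a = b := by
  classical
  set T : Set ℝ := (fun p : X × X => dist p.1 p.2) '' ((s ×ˢ s) ∩ {p | p.1 ≠ p.2}) with hT
  have hTfin : T.Finite := (((hs.prod hs).inter_of_left _).image _)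
  by_cases hne : T.Nonempty
  · have hFne : hTfin.toFinset.Nonempty := by
      simpa [Set.Finite.toFinset_nonempty] using hne
    set m := hTfin.toFinset.min' hFne with hm
    have hmT : m ∈ T := by
      have := hTfin.toFinset.min'_mem hFne
      simpa [Set.Finite.mem_toFinset] using this
    obtain ⟨⟨a, b⟩, ⟨⟨ha, hb⟩, hab⟩, hd⟩ := hmT
    have hmpos : 0 < m := by
      rw [← hd]; exact dist_pos.mpr hab
    refine ⟨m / 3, by linarith, ?_⟩
    intro a' ha' b' hb' hlt
    by_contra hne'
    have : dist a' b' ∈ T := ⟨(a', b'), ⟨⟨ha', hb'⟩, hne'⟩, rfl⟩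
    have : m ≤ dist a' b' := by
      apply hTfin.toFinset.min'_le
      simpa [Set.Finite.mem_toFinset] using this
    linarith
  · refine ⟨1, one_pos, ?_⟩
    intro a ha b hb _
    by_contra hne'
    exact hne ⟨dist a b, ⟨(a, b), ⟨⟨ha, hb⟩, hne'⟩, rfl⟩⟩

lemma omega_subset_nw (f : X ≃ₜ X) (x : X) :
    omegaLimitSet f x ⊆ {y : X | NonWandering f y} := by
  rintro y ⟨φ, hφ, hy⟩ U hU hyU
  have hev : ∀ᶠ m in atTop, (⇑f)^[φ m] x ∈ U := hy (hU.mem_nhds hyU)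
  obtain ⟨N, hN⟩ := eventually_atTop.mp hev
  have hlt : φ N < φ (N + 1) := hφ (Nat.lt_succ_self N)
  refine ⟨φ (N + 1) - φ N, Nat.sub_pos_of_lt hlt, ⟨(⇑f)^[φ (N + 1)] x, ?_, hN _ (Nat.le_succ N)⟩⟩
  refine ⟨(⇑f)^[φ N] x, hN N le_rfl, ?_⟩
  rw [← Function.iterate_add_apply]
  congr 1
  omega

lemma nw_symm {f : X ≃ₜ X} {p : X} (hp : NonWandering f p) :
    NonWandering f (f.symm p) := by
  intro U hU hpU
  have hfU : IsOpen (⇑f '' U) := f.isOpenMap U hU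
  have hpfU : p ∈ ⇑f '' U := ⟨f.symm p, hpU, f.apply_symm_apply p⟩
  obtain ⟨k, hk, z, hz1, hz2⟩ := hp (⇑f '' U) hfU hpfU
  obtain ⟨w, ⟨u, hu, rfl⟩, rfl⟩ := hz1
  obtain ⟨u2, hu2, he⟩ := hz2
  refine ⟨k, hk, ⟨f.symm ((⇑f)^[k] (f u)), ⟨u, hu, ?_⟩, ?_⟩⟩
  · rw [← Function.iterate_succ_apply, Function.iterate_succ_apply']
    exact (f.symm_apply_apply _).symm
  · rw [← he]
    simpa using hu2

lemma nw_symm_iterate {f : X ≃ₜ X} {p : X} (hp : NonWandering f p) (K : ℕ) :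
    NonWandering f ((⇑f.symm)^[K] p) := by
  induction K with
  | zero => simpa using hp
  | succ k ih =>
    rw [Function.iterate_succ_apply']
    exact nw_symm ih

lemma f_mem_omega {f : X ≃ₜ X} {x y : X} (hy : y ∈ omegaLimitSet f x) :
    f y ∈ omegaLimitSet f x := by
  obtain ⟨φ, hφ, hyt⟩ := hy
  refine ⟨fun m => φ m + 1, fun a b h => by simpa using hφ h, ?_⟩
  have : Tendsto (fun m => f ((⇑f)^[φ m] x)) atTop (nhds (f y)) :=
    (f.continuous.tendsto y).comp hyt
  simpa [Function.iterate_succ_apply'] using this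

lemma approach_omega (f : X ≃ₜ X) (x : X) :
    ∀ ε > 0, ∀ᶠ k in atTop, ∃ q ∈ omegaLimitSet f x, dist ((⇑f)^[k] x) q < ε := by
  intro ε hε
  by_contra h
  rw [Filter.not_eventually] at h
  obtain ⟨φ, hφ, hφ2⟩ := Filter.extraction_of_frequently_atTop h
  obtain ⟨a, ψ, hψ, ha⟩ := CompactSpace.tendsto_subseq (fun m => (⇑f)^[φ m] x)
  have haω : a ∈ omegaLimitSet f x := ⟨φ ∘ ψ, hφ.comp hψ, ha⟩
  have hev : ∀ᶠ m in atTop, ((fun m => (⇑f)^[φ m] x) ∘ ψ) m ∈ Metric.ball a ε :=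
    ha (Metric.ball_mem_nhds a hε)
  obtain ⟨m, hm⟩ := hev.exists
  exact hφ2 (ψ m) ⟨a, haω, by simpa [Function.comp] using hm⟩

lemma exists_stable_nw (f : X ≃ₜ X) (hΩ : {x : X | NonWandering f x}.Finite) (x : X) :
    ∃ p, NonWandering f p ∧ x ∈ stableSet f p := by
  classical
  have hωΩ := omega_subset_nw f x
  have hωfin : (omegaLimitSet f x).Finite := hΩ.subset hωΩ
  obtain ⟨ε, hε, hsep⟩ := sep_of_finite hωfin
  have hu : UniformContinuous ⇑f := CompactSpace.uniformContinuous_of_continuous f.continuous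
  rw [Metric.uniformContinuous_iff] at hu
  obtain ⟨δ1, hδ1, hδ1'⟩ := hu ε hε
  set η := min δ1 ε with hηdef
  have hη : 0 < η := lt_min hδ1 hε
  obtain ⟨K0, hK0⟩ := eventually_atTop.mp (approach_omega f x η hη)
  have hQ : ∀ k : ℕ, ∃ q : X, K0 ≤ k →
      q ∈ omegaLimitSet f x ∧ dist ((⇑f)^[k] x) q < η := by
    intro k
    by_cases h : K0 ≤ k
    · obtain ⟨q, hq1, hq2⟩ := hK0 k h
      exact ⟨q, fun _ => ⟨hq1, hq2⟩⟩
    · exact ⟨x, fun h' => absurd h' h⟩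
  choose q hq using hQ
  have huniq : ∀ k, K0 ≤ k → ∀ r ∈ omegaLimitSet f x,
      dist ((⇑f)^[k] x) r < ε → r = q k := by
    intro k hk r hr hdr
    apply hsep r hr (q k) (hq k hk).1
    have h1 := (hq k hk).2
    have h2 : dist r (q k) ≤ dist ((⇑f)^[k] x) r + dist ((⇑f)^[k] x) (q k) := by
      rw [dist_comm ((⇑f)^[k] x) r]; exact dist_triangle _ _ _
    have h3 : η ≤ ε := min_le_right _ _
    linarith
  have hstep : ∀ k, K0 ≤ k → q (k + 1) = f (q k) := by
    intro k hk
    have h1 : dist ((⇑f)^[k + 1] x) (f (q k)) < ε := by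
      rw [Function.iterate_succ_apply']
      exact hδ1' ((hq k hk).2.trans_le (min_le_left _ _))
    exact (huniq (k + 1) (hk.trans (Nat.le_succ k)) (f (q k)) (f_mem_omega (hq k hk).1) h1).symm
  set p := (⇑f.symm)^[K0] (q K0) with hpdef
  have hli : Function.LeftInverse ⇑f ⇑f.symm := f.apply_symm_apply
  have hp0 : (⇑f)^[K0] p = q K0 := hli.iterate K0 (q K0)
  have hqk : ∀ k, K0 ≤ k → (⇑f)^[k] p = q k := by
    intro k hk
    obtain ⟨j, rfl⟩ := Nat.exists_eq_add_of_le hk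
    induction j with
    | zero => simpa using hp0
    | succ i ih =>
      have : K0 + (i + 1) = (K0 + i) + 1 := by omega
      rw [this, Function.iterate_succ_apply', ih (Nat.le_add_right _ _),
        ← hstep (K0 + i) (Nat.le_add_right _ _)]
  refine ⟨p, nw_symm_iterate (hωΩ (hq K0 le_rfl).1) K0, ?_⟩
  rw [stableSet, Set.mem_setOf_eq, Metric.tendsto_atTop]
  intro ε' hε'
  have hε'' : 0 < min ε' ε := lt_min hε' hε
  obtain ⟨K1, hK1⟩ := eventually_atTop.mp (approach_omega f x (min ε' ε) hε'')
  refine ⟨max K0 K1, ?_⟩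
  intro k hk
  obtain ⟨r, hr1, hr2⟩ := hK1 k (le_trans (le_max_right _ _) hk)
  have hkK0 : K0 ≤ k := le_trans (le_max_left _ _) hk
  have hrq : r = q k := huniq k hkK0 r hr1 (hr2.trans_le (min_le_right _ _))
  have : dist ((⇑f)^[k] x) ((⇑f)^[k] p) < ε' := by
    rw [hqk k hkK0, ← hrq]
    exact hr2.trans_le (min_le_left _ _)
  rw [Real.dist_eq, sub_zero, abs_of_nonneg dist_nonneg]
  exact this

lemma stableSet_finite {f : X ≃ₜ X} {n : ℕ} (hexp : PosNExpansive f n) (p : X) :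
    (stableSet f p).Finite := by
  classical
  obtain ⟨c, hc, hC⟩ := hexp
  by_contra h
  replace h : (stableSet f p).Infinite := h
  obtain ⟨S, hSsub, hScard⟩ := h.exists_subset_card_eq (n + 1)
  have hev : ∀ᶠ k in atTop, ∀ y ∈ S, dist ((⇑f)^[k] y) ((⇑f)^[k] p) ≤ c := by
    rw [eventually_all_finset]
    intro y hy
    have hyt : Tendsto (fun k => dist ((⇑f)^[k] y) ((⇑f)^[k] p)) atTop (nhds 0) :=
      hSsub hy
    have : ∀ᶠ k in atTop, dist ((⇑f)^[k] y) ((⇑f)^[k] p) < c :=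
      hyt (Iio_mem_nhds hc)
    exact this.mono fun k hk => le_of_lt hk
  obtain ⟨K, hK⟩ := eventually_atTop.mp hev
  have hinj : Function.Injective ((⇑f)^[K]) := f.injective.iterate K
  have hcard2 : (S.image ((⇑f)^[K])).card = n + 1 := by
    rw [Finset.card_image_of_injective S hinj, hScard]
  have hsub : ↑(S.image ((⇑f)^[K])) ⊆ localStable f c ((⇑f)^[K] p) := by
    intro z hz
    simp only [Finset.coe_image, Set.mem_image, Finset.mem_coe] at hz
    obtain ⟨y, hy, rfl⟩ := hz
    intro j
    rw [← Function.iterate_add_apply, ← Function.iterate_add_apply]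
    exact hK (j + K) (Nat.le_add_left _ _) y hy
  have := hC ((⇑f)^[K] p) (S.image ((⇑f)^[K])) hsub
  omega

end Aux

theorem stmt6 {X : Type*} [MetricSpace X] [CompactSpace X] (f : X ≃ₜ X) (n : ℕ)
    (hn : 0 < n) (hexp : PosNExpansive f n) :
    {x : X | NonWandering f x}.Finite ↔ Finite X := by
  constructor
  · intro hΩ
    have key : ∀ x : X, ∃ p, NonWandering f p ∧ x ∈ stableSet f p :=
      exists_stable_nw f hΩ
    have hfin : (Set.univ : Set X).Finite := by
      refine (hΩ.biUnion (fun p _ => stableSet_finite hexp p)).subset ?_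
      intro x _
      obtain ⟨p, hp, hx⟩ := key x
      exact Set.mem_biUnion hp hx
    exact Set.finite_univ_iff.mp hfin
  · intro hX
    exact Set.toFinite _
end

section
/- Let f be a homeomorphism of a compact metric space (X,d). If f has the L-shadowing property, then f admits only finitely many chain recurrent classes. -/
open Metric Filter Set

variable {X : Type*} [MetricSpace X]

set_option linter.unusedSectionVars false

private def csum (l : ℕ → ℕ) (n : ℕ) : ℕ := ∑ i ∈ Finset.range n, l i

private lemma csum_succ (l : ℕ → ℕ) (n : ℕ) : csum l (n+1) = csum l n + l n :=
  Finset.sum_range_succ l n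

private lemma csum_mono (l : ℕ → ℕ) : Monotone (csum l) := by
  intro a b hab
  exact Finset.sum_le_sum_of_subset (Finset.range_subset_range.2 hab)

private lemma self_le_csum (l : ℕ → ℕ) (hl : ∀ i, 0 < l i) (n : ℕ) : n ≤ csum l n := by
  induction n with
  | zero => simp
  | succ n ih => rw [csum_succ]; have := hl n; omega

private def blk (l : ℕ → ℕ) (j : ℕ) : ℕ := Nat.findGreatest (fun n => csum l n ≤ j) j

set_option linter.unusedSectionVars false

private lemma blk_le (l : ℕ → ℕ) (j : ℕ) : csum l (blk l j) ≤ j :=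
  Nat.findGreatest_spec (P := fun n => csum l n ≤ j) (Nat.zero_le j) (by simp [csum])

private lemma blk_lt (l : ℕ → ℕ) (hl : ∀ i, 0 < l i) (j : ℕ) : j < csum l (blk l j + 1) := by
  by_contra h
  push_neg at h
  have h2 : blk l j + 1 ≤ j := le_trans (self_le_csum l hl _) h
  exact Nat.findGreatest_is_greatest (Nat.lt_succ_self _) h2 h

private lemma blk_eq (l : ℕ → ℕ) (hl : ∀ i, 0 < l i) {j n : ℕ}
    (h1 : csum l n ≤ j) (h2 : j < csum l (n+1)) : blk l j = n := by
  have hb1 := blk_le l j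
  have hb2 := blk_lt l hl j
  rcases lt_trichotomy (blk l j) n with h | h | h
  · have : csum l (blk l j + 1) ≤ csum l n := csum_mono l h
    omega
  · exact h
  · have : csum l (n+1) ≤ csum l (blk l j) := csum_mono l h
    omega

private lemma blk_ge (l : ℕ → ℕ) (hl : ∀ i, 0 < l i) {M j : ℕ} (h : csum l M ≤ j) :
    M ≤ blk l j := by
  by_contra hc
  push_neg at hc
  have h1 : csum l (blk l j + 1) ≤ csum l M := csum_mono l (by omega)
  have h2 := blk_lt l hl j
  omega

private def pseq (l : ℕ → ℕ) (c : ℕ → ℕ → X) (k : ℕ) : X :=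
  c (blk l k) (k - csum l (blk l k))

private def nseq (l : ℕ → ℕ) (c : ℕ → ℕ → X) (j : ℕ) : X :=
  c (blk l j) (csum l (blk l j + 1) - j)

private lemma pseq_csum {x : X} (l : ℕ → ℕ) (c : ℕ → ℕ → X) (hl : ∀ i, 0 < l i)
    (hc0 : ∀ n, c n 0 = x) (n : ℕ) : pseq l c (csum l n) = x := by
  have hb : blk l (csum l n) = n := blk_eq l hl le_rfl (by rw [csum_succ]; have := hl n; omega)
  simp only [pseq, hb, Nat.sub_self]
  exact hc0 n

private lemma nseq_csum {x : X} (l : ℕ → ℕ) (c : ℕ → ℕ → X) (hl : ∀ i, 0 < l i)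
    (hcl : ∀ n, c n (l n) = x) (n : ℕ) : nseq l c (csum l n) = x := by
  have hb : blk l (csum l n) = n := blk_eq l hl le_rfl (by rw [csum_succ]; have := hl n; omega)
  simp only [nseq, hb, csum_succ]
  rw [show csum l n + l n - csum l n = l n from by omega]
  exact hcl n

private lemma pseq_step (f : X ≃ₜ X) (ε : ℕ → ℝ) {x : X} (l : ℕ → ℕ) (c : ℕ → ℕ → X)
    (hl : ∀ i, 0 < l i) (hc0 : ∀ n, c n 0 = x) (hcl : ∀ n, c n (l n) = x)
    (hcs : ∀ n, ∀ k < l n, dist (f (c n k)) (c n (k+1)) < ε n) (k : ℕ) :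
    dist (f (pseq l c k)) (pseq l c (k+1)) < ε (blk l k) := by
  set n := blk l k with hn
  have h1 : csum l n ≤ k := blk_le l k
  have h2 : k < csum l (n+1) := blk_lt l hl k
  have hsum : csum l (n+1) = csum l n + l n := csum_succ l n
  have hpk : pseq l c k = c n (k - csum l n) := rfl
  rcases eq_or_lt_of_le (show k+1 ≤ csum l (n+1) from h2) with heq | hlt
  · -- k+1 is a block boundary
    have hb : blk l (k+1) = n+1 := by
      apply blk_eq l hl (by omega)
      rw [csum_succ]
      have := hl (n+1)
      omega
    have hp1 : pseq l c (k+1) = c (n+1) 0 := by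
      simp only [pseq, hb]
      congr 1
      omega
    rw [hp1, hc0, ← hcl n, hpk]
    rw [show l n = (k - csum l n) + 1 from by omega]
    exact hcs n _ (by omega)
  · have hb : blk l (k+1) = n := blk_eq l hl (by omega) hlt
    have hp1 : pseq l c (k+1) = c n (k+1 - csum l n) := by simp only [pseq, hb]
    rw [hp1, hpk, show k + 1 - csum l n = (k - csum l n) + 1 from by omega]
    exact hcs n _ (by omega)

private lemma nseq_step (f : X ≃ₜ X) (ε : ℕ → ℝ) {x : X} (l : ℕ → ℕ) (c : ℕ → ℕ → X)
    (hl : ∀ i, 0 < l i) (hc0 : ∀ n, c n 0 = x) (hcl : ∀ n, c n (l n) = x)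
    (hcs : ∀ n, ∀ k < l n, dist (f (c n k)) (c n (k+1)) < ε n) (j : ℕ) :
    dist (f (nseq l c (j+1))) (nseq l c j) < ε (blk l j) := by
  set n := blk l j with hn
  have h1 : csum l n ≤ j := blk_le l j
  have h2 : j < csum l (n+1) := blk_lt l hl j
  have hsum : csum l (n+1) = csum l n + l n := csum_succ l n
  have hnj : nseq l c j = c n (csum l (n+1) - j) := rfl
  rcases eq_or_lt_of_le (show j+1 ≤ csum l (n+1) from h2) with heq | hlt
  · have hb : nseq l c (j+1) = x := by rw [heq]; exact nseq_csum l c hl hcl (n+1)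
    rw [hb, hnj, show csum l (n+1) - j = 1 from by omega, ← hc0 n]
    exact hcs n 0 (hl n)
  · have hb : blk l (j+1) = n := blk_eq l hl (by omega) hlt
    have hp1 : nseq l c (j+1) = c n (csum l (n+1) - (j+1)) := by simp only [nseq, hb]
    rw [hp1, hnj, show csum l (n+1) - j = (csum l (n+1) - (j+1)) + 1 from by omega]
    have := hl n
    exact hcs n _ (by omega)

private lemma hIter_succ (f : X ≃ₜ X) (k : ℤ) (z : X) : hIter f (k+1) z = f (hIter f k z) := by
  show (f.toEquiv ^ (k+1)) z = f ((f.toEquiv ^ k) z)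
  rw [show k + 1 = 1 + k from by ring, zpow_one_add, Equiv.Perm.mul_apply]
  rfl

private lemma chainFrom_trans {f : X ≃ₜ X} {ε : ℝ} {a b u : X}
    (h1 : ChainFrom f ε a b) (h2 : ChainFrom f ε b u) : ChainFrom f ε a u := by
  obtain ⟨l1, c1, hl1, h10, h1l, h1s⟩ := h1
  obtain ⟨l2, c2, hl2, h20, h2l, h2s⟩ := h2
  refine ⟨l1 + l2, fun i => if i ≤ l1 then c1 i else c2 (i - l1), by omega,
    by simpa using h10,
    by beta_reduce; rw [if_neg (by omega), show l1 + l2 - l1 = l2 from by omega]; exact h2l, ?_⟩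
  intro k hk
  beta_reduce
  rcases lt_or_ge k l1 with hlt | hge
  · rw [if_pos (by omega), if_pos (by omega)]
    exact h1s k hlt
  · have hck : (if k ≤ l1 then c1 k else c2 (k - l1)) = c2 (k - l1) := by
      rcases eq_or_lt_of_le hge with heq | hgt
      · rw [if_pos (by omega), show k = l1 from heq.symm, h1l, ← h20,
          show l1 - l1 = 0 from by omega]
      · rw [if_neg (by omega)]
    rw [hck, if_neg (by omega), show k + 1 - l1 = (k - l1) + 1 from by omega]
    exact h2s (k - l1) (by omega)

private lemma class_eq {f : X ≃ₜ X} {a b : X} (h1 : ∀ ε > 0, ChainFrom f ε a b)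
    (h2 : ∀ ε > 0, ChainFrom f ε b a) : chainClass f a = chainClass f b := by
  ext u
  simp only [chainClass, Set.mem_setOf_eq]
  constructor
  · intro hu ε hε
    exact ⟨chainFrom_trans (h2 ε hε) ((hu ε hε).1), chainFrom_trans ((hu ε hε).2) (h1 ε hε)⟩
  · intro hu ε hε
    exact ⟨chainFrom_trans (h1 ε hε) ((hu ε hε).1), chainFrom_trans ((hu ε hε).2) (h2 ε hε)⟩

private lemma key_s9 [CompactSpace X] (f : X ≃ₜ X) (hL : LShadowingProperty f) :
    ∃ δ > 0, ∀ x y : X, ChainRecurrent f x → ChainRecurrent f y → dist x y < δ →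
      ∀ ε > 0, ChainFrom f ε x y := by
  obtain ⟨δ, hδ, hshad⟩ := hL 1 one_pos
  refine ⟨δ/2, half_pos hδ, fun x y hx hy hxy ε hε => ?_⟩
  set α : ℕ → ℝ := fun n => min (δ/2) (1/((n:ℝ)+1)) with hαdef
  have hα : ∀ n, 0 < α n := fun n => lt_min (half_pos hδ) (by positivity)
  have hαle : ∀ n, α n ≤ δ/2 := fun n => min_le_left _ _
  have hα2 : ∀ n : ℕ, α n ≤ 1/((n:ℝ)+1) := fun n => min_le_right _ _
  choose l c hl hc0 hcl hcs using fun n => hx (α n) (hα n)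
  choose m d hm hd0 hdl hds using fun n => hy (α n) (hα n)
  set w : ℤ → X := fun k => if k < 0 then nseq l c (-k).toNat else pseq m d k.toNat with hw
  have hwneg : ∀ k : ℤ, k < 0 → w k = nseq l c (-k).toNat := by
    intro k hk; simp only [hw]; rw [if_pos hk]
  have hwpos : ∀ k : ℤ, 0 ≤ k → w k = pseq m d k.toNat := by
    intro k hk; simp only [hw]; rw [if_neg (not_lt.2 hk)]
  have hw0 : w 0 = y := by
    rw [hwpos 0 le_rfl]
    simpa [csum] using pseq_csum m d hm hd0 0
  have stepA : ∀ k : ℤ, k ≤ -2 → dist (f (w k)) (w (k+1)) < α (blk l (-(k+1)).toNat) := by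
    intro k hk
    rw [hwneg k (by omega), hwneg (k+1) (by omega),
      show (-k).toNat = (-(k+1)).toNat + 1 from by omega]
    exact nseq_step f α l c hl hc0 hcl hcs _
  have stepC : ∀ k : ℤ, 0 ≤ k → dist (f (w k)) (w (k+1)) < α (blk m k.toNat) := by
    intro k hk
    rw [hwpos k hk, hwpos (k+1) (by omega), show (k+1).toNat = k.toNat + 1 from by omega]
    exact pseq_step f α m d hm hd0 hdl hds _
  have stepB : dist (f (w (-1))) (w 0) < δ := by
    have h1 : w (-1) = nseq l c 1 := by rw [hwneg (-1) (by norm_num)]; norm_num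
    have hx0 : nseq l c 0 = x := by simpa [csum] using nseq_csum l c hl hcl 0
    have hstep : dist (f (nseq l c 1)) x < δ/2 := by
      have h := nseq_step f α l c hl hc0 hcl hcs 0
      rw [hx0] at h
      exact lt_of_lt_of_le (by simpa using h) (hαle _)
    rw [h1, hw0]
    calc dist (f (nseq l c 1)) y ≤ dist (f (nseq l c 1)) x + dist x y := dist_triangle _ _ _
      _ < δ/2 + δ/2 := add_lt_add hstep hxy
      _ = δ := by ring
  have hPO : IsPseudoOrbit f δ w := by
    intro k
    rcases lt_trichotomy k (-1) with hk | hk | hk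
    · exact ((stepA k (by omega)).trans_le (hαle _)).trans (half_lt_self hδ)
    · rw [hk, show (-1 : ℤ) + 1 = 0 from by norm_num]
      exact stepB
    · exact ((stepC k (by omega)).trans_le (hαle _)).trans (half_lt_self hδ)
  have hTL : IsTwoSidedLimitPseudoOrbit f w := by
    rw [IsTwoSidedLimitPseudoOrbit, Metric.tendsto_nhds]
    intro η hη
    rw [Filter.eventually_cofinite]
    obtain ⟨M, hM⟩ := exists_nat_one_div_lt hη
    apply Set.Finite.subset (Set.finite_Icc (-(csum l M : ℤ) - 1) (csum m M : ℤ))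
    intro k hk
    simp only [Set.mem_setOf_eq, not_lt] at hk
    rw [Real.dist_0_eq_abs, abs_of_nonneg dist_nonneg] at hk
    by_contra hout
    simp only [Set.mem_Icc, not_and_or, not_le] at hout
    have hbound : ∀ n, M ≤ n → α n < η := by
      intro n hn
      calc α n ≤ 1/((n:ℝ)+1) := hα2 n
        _ ≤ 1/((M:ℝ)+1) := by
            apply one_div_le_one_div_of_le (by positivity)
            exact_mod_cast Nat.succ_le_succ hn
        _ < η := hM
    have hsmall : dist (f (w k)) (w (k+1)) < η := by
      rcases hout with hlt | hgt
      · exact (stepA k (by omega)).trans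
          (hbound _ (blk_ge l hl (show csum l M ≤ (-(k+1)).toNat from by omega)))
      · exact (stepC k (by omega)).trans
          (hbound _ (blk_ge m hm (show csum m M ≤ k.toNat from by omega)))
    exact absurd hsmall (not_lt.2 hk)
  obtain ⟨z, -, hz2⟩ := hshad w hPO hTL
  rw [TwoSidedLimitShadows, Int.cofinite_eq, tendsto_sup] at hz2
  obtain ⟨hbot, htop⟩ := hz2
  obtain ⟨η, hη, hUC⟩ := Metric.uniformContinuous_iff.mp
    (CompactSpace.uniformContinuous_of_continuous f.continuous) ε hε
  obtain ⟨N₁, hN₁⟩ := Filter.eventually_atBot.mp ((Metric.tendsto_nhds.mp hbot) η hη)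
  obtain ⟨N₂, hN₂⟩ := Filter.eventually_atTop.mp ((Metric.tendsto_nhds.mp htop) ε hε)
  set M₁ := max 1 (-N₁).toNat with hM₁
  set k₀ : ℤ := -(csum l M₁ : ℤ) with hk₀
  have hcl1 : 1 ≤ csum l M₁ := le_trans (le_max_left _ _) (self_le_csum l hl M₁)
  have hNtoN : (-N₁).toNat ≤ csum l M₁ := le_trans (le_max_right _ _) (self_le_csum l hl M₁)
  have hk₀le : k₀ ≤ N₁ := by omega
  have hwk₀ : w k₀ = x := by
    rw [hwneg k₀ (by omega), show (-k₀).toNat = csum l M₁ from by omega]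
    exact nseq_csum l c hl hcl M₁
  have hdk₀ : dist (hIter f k₀ z) x < η := by
    have h := hN₁ k₀ hk₀le
    rwa [Real.dist_0_eq_abs, abs_of_nonneg dist_nonneg, hwk₀] at h
  set M₂ := max 1 N₂.toNat with hM₂
  set k₁ : ℤ := (csum m M₂ : ℤ) with hk₁
  have hcm1 : 1 ≤ csum m M₂ := le_trans (le_max_left _ _) (self_le_csum m hm M₂)
  have hN2toN : N₂.toNat ≤ csum m M₂ := le_trans (le_max_right _ _) (self_le_csum m hm M₂)
  have hk₁ge : N₂ ≤ k₁ := by omega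
  have hwk₁ : w k₁ = y := by
    rw [hwpos k₁ (by omega), show k₁.toNat = csum m M₂ from by omega]
    exact pseq_csum m d hm hd0 M₂
  have hdk₁ : dist (hIter f k₁ z) y < ε := by
    have h := hN₂ k₁ hk₁ge
    rwa [Real.dist_0_eq_abs, abs_of_nonneg dist_nonneg, hwk₁] at h
  set L := (k₁ - k₀).toNat with hLdef
  have hL2 : 2 ≤ L := by omega
  have hLk : (L : ℤ) = k₁ - k₀ := by omega
  refine ⟨L, fun i => if i = 0 then x else if L ≤ i then y else hIter f (k₀ + i) z,
    by omega, by simp, by beta_reduce; rw [if_neg (by omega), if_pos le_rfl], ?_⟩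
  intro i hiL
  beta_reduce
  rcases Nat.eq_zero_or_pos i with h0 | hpos
  · subst h0
    rw [if_pos rfl, if_neg (show ¬ 0+1 = 0 from by omega), if_neg (show ¬ L ≤ 0+1 from by omega)]
    rw [show (k₀ + ((0:ℕ)+1 : ℕ) : ℤ) = k₀ + 1 from by push_cast; ring, hIter_succ f k₀ z]
    exact hUC (by rwa [dist_comm] at hdk₀)
  · rcases eq_or_lt_of_le (show i + 1 ≤ L from hiL) with hlast | hmid
    · rw [if_neg (show ¬ i = 0 from by omega), if_neg (show ¬ L ≤ i from by omega),
        if_neg (show ¬ i+1 = 0 from by omega), if_pos (show L ≤ i+1 from by omega)]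
      rw [← hIter_succ f (k₀ + i) z, show k₀ + (i:ℤ) + 1 = k₁ from by omega]
      exact hdk₁
    · rw [if_neg (show ¬ i = 0 from by omega), if_neg (show ¬ L ≤ i from by omega),
        if_neg (show ¬ i+1 = 0 from by omega), if_neg (show ¬ L ≤ i+1 from by omega)]
      rw [show ((i+1 : ℕ) : ℤ) = (i:ℤ)+1 from by push_cast; ring,
        show k₀ + ((i:ℤ)+1) = (k₀ + i) + 1 from by ring, hIter_succ f (k₀ + (i:ℤ)) z,
        dist_self]
      exact hε

theorem stmt9 {X : Type*} [MetricSpace X] [CompactSpace X] (f : X ≃ₜ X)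
    (hL : LShadowingProperty f) :
    {C : Set X | ∃ x : X, ChainRecurrent f x ∧ C = chainClass f x}.Finite := by
  classical
  obtain ⟨δ, hδ, hkey⟩ := key_s9 f hL
  rcases isEmpty_or_nonempty X with hX | hX
  · have he : {C : Set X | ∃ x : X, ChainRecurrent f x ∧ C = chainClass f x} = ∅ := by
      ext C; simp
    rw [he]; exact Set.finite_empty
  · obtain ⟨t, -, htf, hcov⟩ := finite_cover_balls_of_compact (isCompact_univ (X := X))
      (half_pos hδ)
    set g : Set X → X := fun C =>
      if h : ∃ x : X, ChainRecurrent f x ∧ C = chainClass f x then h.choose else hX.some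
      with hg
    set p : X → X := fun v => if h : ∃ u ∈ t, v ∈ Metric.ball u (δ/2) then h.choose else v
      with hp
    have hps : ∀ v : X, p v ∈ t ∧ dist v (p v) < δ/2 := by
      intro v
      have hv : ∃ u ∈ t, v ∈ Metric.ball u (δ/2) := by simpa using hcov (Set.mem_univ v)
      have hs := hv.choose_spec
      simp only [hp, dif_pos hv]
      exact ⟨hs.1, by simpa [Metric.mem_ball] using hs.2⟩
    have hgs : ∀ C ∈ {C : Set X | ∃ x : X, ChainRecurrent f x ∧ C = chainClass f x},
        ChainRecurrent f (g C) ∧ C = chainClass f (g C) := by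
      intro C hC
      have hC' : ∃ x : X, ChainRecurrent f x ∧ C = chainClass f x := hC
      simp only [hg, dif_pos hC']
      exact hC'.choose_spec
    apply Set.Finite.of_finite_image (f := fun C => p (g C))
    · apply htf.subset
      rintro _ ⟨C, hC, rfl⟩
      exact (hps (g C)).1
    · intro C hC C' hC' hpe
      obtain ⟨hr, hCe⟩ := hgs C hC
      obtain ⟨hr', hCe'⟩ := hgs C' hC'
      have h1 := (hps (g C)).2
      have h2 := (hps (g C')).2
      have hpe' : p (g C) = p (g C') := hpe
      have hdist : dist (g C) (g C') < δ := by
        calc dist (g C) (g C')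
            ≤ dist (g C) (p (g C)) + dist (p (g C)) (g C') := dist_triangle _ _ _
          _ = dist (g C) (p (g C)) + dist (p (g C')) (g C') := by rw [hpe']
          _ < δ/2 + δ/2 := add_lt_add h1 (by rwa [dist_comm] at h2)
          _ = δ := by ring
      have e1 : ∀ ε > 0, ChainFrom f ε (g C) (g C') :=
        fun ε hε => hkey _ _ hr hr' hdist ε hε
      have e2 : ∀ ε > 0, ChainFrom f ε (g C') (g C) :=
        fun ε hε => hkey _ _ hr' hr (by rwa [dist_comm] at hdist) ε hε
      exact hCe.trans ((class_eq e1 e2).trans hCe'.symm)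
end
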